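/- Let C be a binary linear [n,k]-code with minimum distance d and maximum weight d'. Let C' be the code of length n+p obtained by appending p zero coordinates to every codeword of C, and let Ĉ be the span of C' and the all-one vector of length n+p (assume d' < n+p so the all-one vector is not in C'). Then Ĉ is a binary linear [n+p, k+1]-code with minimum distance exactly min(d, n+p-d'). -/
import Mathlib


/-- The linear map appending `p` zero coordinates to a vector of length `n`. -/
def padMap (n p : ℕ) : (Fin n → ZMod 2) →ₗ[ZMod 2] (Fin (n + p) → ZMod 2) where
  toFun c := fun i => if h : (i : ℕ) < n then c ⟨i, h⟩ else 0
  map_add' x y := by funext i; by_cases h : (i : ℕ) < n <;> simp [h]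
  map_smul' m x := by funext i; by_cases h : (i : ℕ) < n <;> simp [h]

lemma padMap_norm (n p : ℕ) (c : Fin n → ZMod 2) :
    hammingNorm (padMap n p c) = hammingNorm c := by
  unfold hammingNorm
  rw [Finset.card_filter, Finset.card_filter, Fin.sum_univ_add]
  have h1 : ∀ i : Fin n, (padMap n p c) (Fin.castAdd p i) = c i := by
    intro i
    simp [padMap, i.isLt]
  have h2 : ∀ i : Fin p, (padMap n p c) (Fin.natAdd n i) = 0 := by
    intro i
    have : ¬ ((Fin.natAdd n i : ℕ) < n) := by simp
    simp [padMap, this]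
  simp [h1, h2]

lemma padMap_injective (n p : ℕ) : Function.Injective (padMap n p) := by
  intro a b hab
  funext i
  have := congrFun hab (Fin.castAdd p i)
  simpa [padMap, i.isLt] using this

lemma norm_add_one {m : ℕ} (x : Fin m → ZMod 2) :
    hammingNorm (x + fun _ => (1 : ZMod 2)) = m - hammingNorm x := by
  unfold hammingNorm
  have key : (Finset.univ.filter fun i => ((x + fun _ => (1 : ZMod 2)) : Fin m → ZMod 2) i ≠ 0)
      = Finset.univ.filter fun i => ¬ (x i ≠ 0) := by
    apply Finset.filter_congr
    intro i _
    have hz : ∀ a : ZMod 2, (a + 1 ≠ 0) ↔ ¬ (a ≠ 0) := by decide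
    simpa using hz (x i)
  rw [key, Finset.filter_not, Finset.card_sdiff_of_subset (Finset.filter_subset _ _)]
  simp

lemma zmod2_cases : ∀ r : ZMod 2, r = 0 ∨ r = 1 := by decide

/-- Padding a [n,k]-code C of minimum distance d and maximum weight d' with
p zeros and adjoining the all-one vector (assuming d' < n+p) yields an [n+p,k+1]-code with
minimum distance exactly min(d, n+p-d'). -/
theorem stmt_4 (n k d d' p : ℕ) (C : Submodule (ZMod 2) (Fin n → ZMod 2))
    (hk : Module.finrank (ZMod 2) C = k) (hk1 : 1 ≤ k)
    (hd_lb : ∀ c ∈ C, c ≠ 0 → d ≤ hammingNorm c)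
    (hd_ex : ∃ c ∈ C, c ≠ 0 ∧ hammingNorm c = d)
    (hd'_ub : ∀ c ∈ C, hammingNorm c ≤ d')
    (hd'_ex : ∃ c ∈ C, hammingNorm c = d')
    (hlt : d' < n + p)
    (v : Fin (n + p) → ZMod 2) (hv : v = fun _ => 1)
    (C' : Submodule (ZMod 2) (Fin (n + p) → ZMod 2)) (hC' : C' = Submodule.map (padMap n p) C)
    (Chat : Submodule (ZMod 2) (Fin (n + p) → ZMod 2))
    (hChat : Chat = C' ⊔ Submodule.span (ZMod 2) {v}) :
    Module.finrank (ZMod 2) Chat = k + 1 ∧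
      (∀ c ∈ Chat, c ≠ 0 → min d (n + p - d') ≤ hammingNorm c) ∧
      (∃ c ∈ Chat, c ≠ 0 ∧ hammingNorm c = min d (n + p - d')) := by
  have hvnorm : hammingNorm v = n + p := by
    rw [hv]
    unfold hammingNorm
    simp
  have hvne : v ≠ 0 := by
    intro h
    rw [h] at hvnorm
    simp at hvnorm
    omega
  have hvC' : v ∉ C' := by
    intro h
    rw [hC'] at h
    rcases h with ⟨c, hc, hcv⟩
    have := hd'_ub c hc
    rw [← padMap_norm n p c, hcv, hvnorm] at this
    omega
  -- membership characterization
  have hmem : ∀ x ∈ Chat, ∃ c ∈ C, x = padMap n p c ∨ x = padMap n p c + v := by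
    intro x hx
    rw [hChat] at hx
    rcases Submodule.mem_sup.mp hx with ⟨y, hy, z, hz, rfl⟩
    rw [hC'] at hy
    rcases hy with ⟨c, hc, rfl⟩
    rcases Submodule.mem_span_singleton.mp hz with ⟨r, rfl⟩
    rcases zmod2_cases r with rfl | rfl
    · exact ⟨c, hc, Or.inl (by simp)⟩
    · exact ⟨c, hc, Or.inr (by simp)⟩
  refine ⟨?_, ?_, ?_⟩
  · -- dimension
    have hinf : C' ⊓ Submodule.span (ZMod 2) {v} = ⊥ := by
      rw [Submodule.eq_bot_iff]
      rintro x ⟨hx1, hx2⟩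
      rcases Submodule.mem_span_singleton.mp hx2 with ⟨r, rfl⟩
      rcases zmod2_cases r with rfl | rfl
      · simp
      · rw [one_smul] at hx1
        exact absurd hx1 hvC'
    have hC'rank : Module.finrank (ZMod 2) C' = k := by
      rw [hC', ← hk]
      exact ((Submodule.equivMapOfInjective _ (padMap_injective n p) C).finrank_eq).symm
    have hspan : Module.finrank (ZMod 2) (Submodule.span (ZMod 2) {v}) = 1 :=
      finrank_span_singleton hvne
    have := Submodule.finrank_sup_add_finrank_inf_eq C' (Submodule.span (ZMod 2) {v})
    rw [hinf, hC'rank, hspan] at this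
    rw [hChat]
    simpa using this
  · -- lower bound
    intro x hx hx0
    rcases hmem x hx with ⟨c, hc, rfl | rfl⟩
    · have hc0 : c ≠ 0 := by
        rintro rfl
        simp at hx0
      have h1 := hd_lb c hc hc0
      rw [padMap_norm]
      exact le_trans (min_le_left _ _) h1
    · have h1 : hammingNorm (padMap n p c + v) = n + p - hammingNorm c := by
        rw [hv, norm_add_one, padMap_norm]
      have h2 := hd'_ub c hc
      have h3 := min_le_right d (n + p - d')
      omega
  · -- existence
    rcases le_or_gt d (n + p - d') with hcase | hcase
    · rcases hd_ex with ⟨c, hc, hc0, hcd⟩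
      refine ⟨padMap n p c, ?_, ?_, ?_⟩
      · rw [hChat]
        exact Submodule.mem_sup_left (hC' ▸ Submodule.mem_map_of_mem hc)
      · intro h
        exact hc0 (padMap_injective n p (by simpa using h))
      · rw [padMap_norm, hcd, min_eq_left hcase]
    · rcases hd'_ex with ⟨c, hc, hcd⟩
      have h1 : hammingNorm (padMap n p c + v) = n + p - d' := by
        rw [hv, norm_add_one, padMap_norm, hcd]
      refine ⟨padMap n p c + v, ?_, ?_, ?_⟩
      · rw [hChat]
        exact Submodule.add_mem _ (Submodule.mem_sup_left (hC' ▸ Submodule.mem_map_of_mem hc))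
          (Submodule.mem_sup_right (Submodule.mem_span_singleton_self v))
      · intro h
        rw [h] at h1
        simp at h1
        omega
      · rw [h1, min_eq_right hcase.le]
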